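/- arXiv:2103.11275 — 3 statements merged into one kernel-verified Lean document; each statement's English description precedes it below -/
import Mathlib

section
/- Let P and Q be probability measures on a measurable space 𝒳 with P absolutely continuous with respect to Q, let r = dP/dQ be the Radon–Nikodym derivative, and fix α, β, γ > 0. Define f*(x) = (r(x) − α)/(β r(x) + γ). Then for every measurable f : 𝒳 → ℝ with f ∈ L²(P) ∩ L²(Q), one has J(f) ≤ J(f*), where J(g) = E_P[g] − α E_Q[g] − (β/2) E_P[g²] − (γ/2) E_Q[g²]. In particular f* attains the supremum of J over all such functions f. -/
open MeasureTheory

/-- The RPC functional `J(g) = E_P[g] - α E_Q[g] - (β/2) E_P[g²] - (γ/2) E_Q[g²]`. -/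
noncomputable def rpcJ {X : Type*} [MeasurableSpace X] (P Q : Measure X) (α β γ : ℝ)
    (g : X → ℝ) : ℝ :=
  (∫ x, g x ∂P) - α * (∫ x, g x ∂Q) - β / 2 * (∫ x, (g x) ^ 2 ∂P)
    - γ / 2 * (∫ x, (g x) ^ 2 ∂Q)

/-- The relative density ratio `f*(x) = (r(x) - α)/(β r(x) + γ)` with `r = dP/dQ`. -/
noncomputable def relRatio {X : Type*} [MeasurableSpace X] (P Q : Measure X) (α β γ : ℝ)
    (x : X) : ℝ :=
  ((P.rnDeriv Q x).toReal - α) / (β * (P.rnDeriv Q x).toReal + γ)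

/-!
Proof. Changing measure with `r = dP/dQ` writes `J(f)` as the single integral
`∫ ((r - α) f - (β r + γ)/2 · f²) dQ`. For each `x` the integrand is a concave quadratic in
`f x`, maximised at its vertex `(r x - α)/(β r x + γ) = f* x`, so `J(f) ≤ J(f*)` by monotonicity
of the integral. Finally `f*` is bounded by `1/β + |α|/γ`, hence square integrable for both
finite measures.
-/

lemma mul_sub_half_mul_sq_le_of_pos {a b : ℝ} (hb : 0 < b) (y : ℝ) :
    a * y - b / 2 * y ^ 2 ≤ a * (a / b) - b / 2 * (a / b) ^ 2 := by
  have hvertex : a * (a / b) - b / 2 * (a / b) ^ 2 - (a * y - b / 2 * y ^ 2)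
      = b / 2 * (y - a / b) ^ 2 := by
    field_simp
    ring
  linarith [mul_nonneg (half_pos hb).le (sq_nonneg (y - a / b))]

namespace MeasureTheory

variable {X : Type*} [MeasurableSpace X] {μ : Measure X} [IsFiniteMeasure μ] {f : X → ℝ}

lemma MemLp.integrable_mul_sub_mul_sq (hf : MemLp f 2 μ) (a b : ℝ) :
    Integrable (fun x ↦ a * f x - b * f x ^ 2) μ :=
  ((hf.integrable one_le_two).const_mul a).sub (hf.integrable_sq.const_mul b)

lemma MemLp.integral_mul_sub_mul_sq (hf : MemLp f 2 μ) (a b : ℝ) :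
    ∫ x, a * f x - b * f x ^ 2 ∂μ = a * ∫ x, f x ∂μ - b * ∫ x, f x ^ 2 ∂μ := by
  rw [integral_sub ((hf.integrable one_le_two).const_mul a) (hf.integrable_sq.const_mul b),
    integral_const_mul, integral_const_mul]

end MeasureTheory

section RPC

variable {X : Type*} [MeasurableSpace X] {P Q : Measure X} {α β γ : ℝ} {f : X → ℝ}

lemma measurable_relRatio : Measurable (relRatio P Q α β γ) := by
  have hr := (Measure.measurable_rnDeriv P Q).ennreal_toReal
  exact (hr.sub measurable_const).div ((hr.const_mul β).add measurable_const)

lemma abs_relRatio_le (hβ : 0 < β) (hγ : 0 < γ) (x : X) :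
    |relRatio P Q α β γ x| ≤ 1 / β + |α| / γ := by
  set r := (P.rnDeriv Q x).toReal
  have hr : 0 ≤ r := ENNReal.toReal_nonneg
  have hden : 0 < β * r + γ := by positivity
  calc |relRatio P Q α β γ x| = |r - α| / (β * r + γ) := by
        rw [relRatio, abs_div, abs_of_pos hden]
    _ ≤ r / (β * r + γ) + |α| / (β * r + γ) := by
        rw [← add_div]
        gcongr
        simpa [abs_of_nonneg hr] using abs_sub r α
    _ ≤ 1 / β + |α| / γ := by
        gcongr ?_ + ?_
        · rw [div_le_div_iff₀ hden hβ]
          linarith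
        · exact div_le_div_of_nonneg_left (abs_nonneg α) hγ (by linarith [mul_nonneg hβ.le hr])

lemma memLp_relRatio (μ : Measure X) [IsFiniteMeasure μ] (hβ : 0 < β) (hγ : 0 < γ) :
    MemLp (relRatio P Q α β γ) 2 μ :=
  MemLp.of_bound measurable_relRatio.aestronglyMeasurable _
    (Filter.Eventually.of_forall (abs_relRatio_le hβ hγ))

variable [IsFiniteMeasure P] [IsFiniteMeasure Q]

lemma rpc_integrand_eq (r y : ℝ) :
    (r - α) * y - (β * r + γ) / 2 * y ^ 2
      = r * (1 * y - β / 2 * y ^ 2) + (-α * y - γ / 2 * y ^ 2) := by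
  ring

lemma integrable_rpc_integrand (hPQ : P ≪ Q) (hfP : MemLp f 2 P) (hfQ : MemLp f 2 Q) :
    Integrable (fun x ↦ ((P.rnDeriv Q x).toReal - α) * f x
      - (β * (P.rnDeriv Q x).toReal + γ) / 2 * f x ^ 2) Q := by
  simp_rw [rpc_integrand_eq]
  exact ((integrable_toReal_rnDeriv_mul_iff hPQ).2 (hfP.integrable_mul_sub_mul_sq 1 (β / 2))).add
    (hfQ.integrable_mul_sub_mul_sq (-α) (γ / 2))

lemma rpcJ_eq_integral (hPQ : P ≪ Q) (hfP : MemLp f 2 P) (hfQ : MemLp f 2 Q) :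
    rpcJ P Q α β γ f = ∫ x, ((P.rnDeriv Q x).toReal - α) * f x
      - (β * (P.rnDeriv Q x).toReal + γ) / 2 * f x ^ 2 ∂Q := by
  simp_rw [rpc_integrand_eq]
  have hdP := hfP.integrable_mul_sub_mul_sq 1 (β / 2)
  rw [integral_add ((integrable_toReal_rnDeriv_mul_iff hPQ).2 hdP)
      (hfQ.integrable_mul_sub_mul_sq _ _), integral_toReal_rnDeriv_mul hPQ,
    hfP.integral_mul_sub_mul_sq, hfQ.integral_mul_sub_mul_sq, rpcJ]
  ring

lemma rpcJ_le_rpcJ_relRatio (hPQ : P ≪ Q) (hβ : 0 < β) (hγ : 0 < γ)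
    (hfP : MemLp f 2 P) (hfQ : MemLp f 2 Q) :
    rpcJ P Q α β γ f ≤ rpcJ P Q α β γ (relRatio P Q α β γ) := by
  have hP := memLp_relRatio (P := P) (Q := Q) (α := α) P hβ hγ
  have hQ := memLp_relRatio (P := P) (Q := Q) (α := α) Q hβ hγ
  rw [rpcJ_eq_integral hPQ hfP hfQ, rpcJ_eq_integral hPQ hP hQ]
  refine integral_mono (integrable_rpc_integrand hPQ hfP hfQ)
    (integrable_rpc_integrand hPQ hP hQ) fun x ↦ ?_
  exact mul_sub_half_mul_sq_le_of_pos (by positivity) (f x)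

end RPC

theorem rpc_optimal_solution_general {X : Type*} [MeasurableSpace X] (P Q : Measure X)
    [IsProbabilityMeasure P] [IsProbabilityMeasure Q] (hPQ : P ≪ Q)
    (α β γ : ℝ) (hβ : 0 < β) (hγ : 0 < γ) :
    (∀ f : X → ℝ, Measurable f → MemLp f 2 P → MemLp f 2 Q →
      rpcJ P Q α β γ f ≤ rpcJ P Q α β γ (relRatio P Q α β γ)) ∧
    IsGreatest {z : ℝ | ∃ f : X → ℝ, Measurable f ∧ MemLp f 2 P ∧ MemLp f 2 Q ∧
        z = rpcJ P Q α β γ f}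
      (rpcJ P Q α β γ (relRatio P Q α β γ)) := by
  have hle : ∀ f : X → ℝ, Measurable f → MemLp f 2 P → MemLp f 2 Q →
      rpcJ P Q α β γ f ≤ rpcJ P Q α β γ (relRatio P Q α β γ) :=
    fun f _ hfP hfQ ↦ rpcJ_le_rpcJ_relRatio hPQ hβ hγ hfP hfQ
  refine ⟨hle, ⟨relRatio P Q α β γ, measurable_relRatio, memLp_relRatio P hβ hγ,
    memLp_relRatio Q hβ hγ, rfl⟩, ?_⟩
  rintro z ⟨f, hf, hfP, hfQ, rfl⟩
  exact hle f hf hfP hfQ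

/-- Lemma 1 (Optimal Solution for J_RPC): for probability measures `P ≪ Q` and
relative parameters `α, β, γ > 0`, every measurable `f ∈ L²(P) ∩ L²(Q)` satisfies
`J(f) ≤ J(f*)` where `f* = (dP/dQ - α)/(β dP/dQ + γ)`; in particular `f*` attains
the supremum of `J` over all such functions. -/
theorem rpc_optimal_solution {X : Type*} [MeasurableSpace X] (P Q : Measure X)
    [IsProbabilityMeasure P] [IsProbabilityMeasure Q] (hPQ : P ≪ Q)
    (α β γ : ℝ) (hα : 0 < α) (hβ : 0 < β) (hγ : 0 < γ) :
    (∀ f : X → ℝ, Measurable f → MemLp f 2 P → MemLp f 2 Q →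
      rpcJ P Q α β γ f ≤ rpcJ P Q α β γ (relRatio P Q α β γ)) ∧
    IsGreatest {z : ℝ | ∃ f : X → ℝ, Measurable f ∧ MemLp f 2 P ∧ MemLp f 2 Q ∧
        z = rpcJ P Q α β γ f}
      (rpcJ P Q α β γ (relRatio P Q α β γ)) :=
  rpc_optimal_solution_general P Q hPQ α β γ hβ hγ
end

section
/- Let P and Q be probability measures on a measurable space 𝒳 and fix α, β, γ > 0. Then for every measurable f : 𝒳 → ℝ with f ∈ L²(P) ∩ L²(Q), J(f) ≤ 1/(2β) + α²/(2γ), where J(f) = E_P[f] − α E_Q[f] − (β/2) E_P[f²] − (γ/2) E_Q[f²]; moreover J(0) = 0, so the supremum of J over all such f satisfies 0 ≤ sup_f J(f) ≤ 1/(2β) + α²/(2γ). -/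
open MeasureTheory

/-!
`J(f)` splits into a `P`-part `E_P[f - (β/2) f²]` and a `Q`-part `E_Q[-α f - (γ/2) f²]`.
Each integrand is a concave quadratic in the value of `f`, bounded pointwise by its maximum
(`1/(2β)`, resp. `α²/(2γ)`), and integrating this constant against a probability measure
bounds each part. The zero function gives `J = 0`, so the supremum lies between the two.
-/

lemma mul_sub_half_mul_sq_le (a t : ℝ) {c : ℝ} (hc : 0 < c) :
    a * t - c / 2 * t ^ 2 ≤ a ^ 2 / (2 * c) := by
  rw [le_div_iff₀ (by positivity)]
  nlinarith [sq_nonneg (c * t - a)]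

lemma mul_integral_sub_half_mul_integral_sq_le {X : Type*} [MeasurableSpace X]
    {μ : Measure X} [IsProbabilityMeasure μ] {f : X → ℝ} (hf : MemLp f 2 μ)
    (a : ℝ) {c : ℝ} (hc : 0 < c) :
    a * ∫ x, f x ∂μ - c / 2 * ∫ x, f x ^ 2 ∂μ ≤ a ^ 2 / (2 * c) := by
  have hf₁ : Integrable (fun x => a * f x) μ := (hf.integrable one_le_two).const_mul a
  have hf₂ : Integrable (fun x => c / 2 * f x ^ 2) μ := hf.integrable_sq.const_mul _
  calc a * ∫ x, f x ∂μ - c / 2 * ∫ x, f x ^ 2 ∂μ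
      = ∫ x, (a * f x - c / 2 * f x ^ 2) ∂μ := by
        rw [integral_sub hf₁ hf₂, integral_const_mul, integral_const_mul]
    _ ≤ ∫ _, a ^ 2 / (2 * c) ∂μ :=
        integral_mono (hf₁.sub hf₂) (integrable_const _) fun x => mul_sub_half_mul_sq_le a (f x) hc
    _ = a ^ 2 / (2 * c) := by simp

lemma rpcJ_le {X : Type*} [MeasurableSpace X] {P Q : Measure X}
    [IsProbabilityMeasure P] [IsProbabilityMeasure Q] (α : ℝ) {β γ : ℝ}
    (hβ : 0 < β) (hγ : 0 < γ) {f : X → ℝ} (hP : MemLp f 2 P) (hQ : MemLp f 2 Q) :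
    rpcJ P Q α β γ f ≤ 1 / (2 * β) + α ^ 2 / (2 * γ) := by
  have hJP := mul_integral_sub_half_mul_integral_sq_le hP 1 hβ
  have hJQ := mul_integral_sub_half_mul_integral_sq_le hQ (-α) hγ
  rw [one_pow, one_mul] at hJP
  rw [neg_sq, neg_mul] at hJQ
  rw [rpcJ]
  linarith

lemma rpcJ_zero {X : Type*} [MeasurableSpace X] (P Q : Measure X) (α β γ : ℝ) :
    rpcJ P Q α β γ (fun _ => 0) = 0 := by
  simp [rpcJ]

theorem rpc_boundedness_general {X : Type*} [MeasurableSpace X] (P Q : Measure X)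
    [IsProbabilityMeasure P] [IsProbabilityMeasure Q]
    (α β γ : ℝ) (hβ : 0 < β) (hγ : 0 < γ) :
    (∀ f : X → ℝ, Measurable f → MemLp f 2 P → MemLp f 2 Q →
      rpcJ P Q α β γ f ≤ 1 / (2 * β) + α ^ 2 / (2 * γ)) ∧
    rpcJ P Q α β γ (fun _ => 0) = 0 ∧
    0 ≤ sSup {z : ℝ | ∃ f : X → ℝ, Measurable f ∧ MemLp f 2 P ∧ MemLp f 2 Q ∧
        z = rpcJ P Q α β γ f} ∧
    sSup {z : ℝ | ∃ f : X → ℝ, Measurable f ∧ MemLp f 2 P ∧ MemLp f 2 Q ∧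
        z = rpcJ P Q α β γ f} ≤ 1 / (2 * β) + α ^ 2 / (2 * γ) := by
  have hbound : ∀ f : X → ℝ, Measurable f → MemLp f 2 P → MemLp f 2 Q →
      rpcJ P Q α β γ f ≤ 1 / (2 * β) + α ^ 2 / (2 * γ) :=
    fun f _ hP hQ => rpcJ_le α hβ hγ hP hQ
  have hzero_mem : 0 ∈ {z : ℝ | ∃ f : X → ℝ, Measurable f ∧ MemLp f 2 P ∧ MemLp f 2 Q ∧
      z = rpcJ P Q α β γ f} :=
    ⟨fun _ => 0, measurable_const, memLp_const 0, memLp_const 0, (rpcJ_zero P Q α β γ).symm⟩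
  have hupper : 1 / (2 * β) + α ^ 2 / (2 * γ) ∈ upperBounds {z : ℝ | ∃ f : X → ℝ,
      Measurable f ∧ MemLp f 2 P ∧ MemLp f 2 Q ∧ z = rpcJ P Q α β γ f} := by
    rintro z ⟨f, hf, hP, hQ, rfl⟩
    exact hbound f hf hP hQ
  exact ⟨hbound, rpcJ_zero P Q α β γ, le_csSup ⟨_, hupper⟩ hzero_mem,
    csSup_le ⟨0, hzero_mem⟩ hupper⟩

/-- Boundedness part of Proposition 1: for probability measures `P`, `Q` and
relative parameters `α, β, γ > 0`, every measurable `f ∈ L²(P) ∩ L²(Q)` satisfies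
`J(f) ≤ 1/(2β) + α²/(2γ)`; moreover `J(0) = 0`, so
`0 ≤ sup_f J(f) ≤ 1/(2β) + α²/(2γ)`. -/
theorem rpc_boundedness {X : Type*} [MeasurableSpace X] (P Q : Measure X)
    [IsProbabilityMeasure P] [IsProbabilityMeasure Q]
    (α β γ : ℝ) (hα : 0 < α) (hβ : 0 < β) (hγ : 0 < γ) :
    (∀ f : X → ℝ, Measurable f → MemLp f 2 P → MemLp f 2 Q →
      rpcJ P Q α β γ f ≤ 1 / (2 * β) + α ^ 2 / (2 * γ)) ∧
    rpcJ P Q α β γ (fun _ => 0) = 0 ∧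
    0 ≤ sSup {z : ℝ | ∃ f : X → ℝ, Measurable f ∧ MemLp f 2 P ∧ MemLp f 2 Q ∧
        z = rpcJ P Q α β γ f} ∧
    sSup {z : ℝ | ∃ f : X → ℝ, Measurable f ∧ MemLp f 2 P ∧ MemLp f 2 Q ∧
        z = rpcJ P Q α β γ f} ≤ 1 / (2 * β) + α ^ 2 / (2 * γ) :=
  rpc_boundedness_general P Q α β γ hβ hγ
end

section
/- Let P and Q be probability measures on a measurable space 𝒳 with P absolutely continuous with respect to Q and KL(P ‖ Q) < ∞. Then for every measurable f : 𝒳 → ℝ such that f is P-integrable and e^{f−1} is Q-integrable, E_P[f] − E_Q[e^{f−1}] ≤ KL(P ‖ Q), and the supremum of the left-hand side over all such f equals KL(P ‖ Q), attained at f = 1 + log(dP/dQ). -/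
/-!
Pointwise, `t ↦ exp (t - 1)` has convex conjugate `a ↦ a log a`:
`a t - exp (t - 1) ≤ a log a`, with equality at `t = 1 + log a`. Since
`E_P[f] = E_Q[(dP/dQ) f]`, integrating this against `Q` with `a = dP/dQ` gives the upper bound,
with equality at `f = 1 + log (dP/dQ)`. That `f` is not admissible where `dP/dQ = 0` (there
`e^{f-1}` should vanish); raising `dP/dQ` to `δ > 0` on that `P`-null set leaves `E_P[f]`
unchanged and raises `E_Q[e^{f-1}]` by at most `δ Q(X)`, so the supremum is still `KL(P‖Q)`.
-/

open MeasureTheory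

/-- The Kullback–Leibler divergence `KL(P‖Q) = ∫ log (dP/dQ) dP` (as a real
number, meaningful when `P ≪ Q` and the integral is finite). -/
noncomputable def klReal {X : Type*} [MeasurableSpace X] (P Q : Measure X) : ℝ :=
  ∫ x, Real.log ((P.rnDeriv Q x).toReal) ∂P

namespace Real

theorem mul_sub_exp_sub_one_le_mul_log {a : ℝ} (ha : 0 ≤ a) (t : ℝ) :
    a * t - exp (t - 1) ≤ a * log a := by
  rcases ha.eq_or_lt with rfl | ha
  · simp [(exp_pos _).le]
  · have key := mul_le_mul_of_nonneg_left (add_one_le_exp (t - 1 - log a)) ha.le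
    rw [exp_sub (t - 1), exp_log ha, mul_div_cancel₀ _ ha.ne'] at key
    linarith

end Real

section NWJ

variable {X : Type*} [MeasurableSpace X] {P Q : Measure X}

noncomputable def nwjObjective (P Q : Measure X) (f : X → ℝ) : ℝ :=
  (∫ x, f x ∂P) - ∫ x, Real.exp (f x - 1) ∂Q

theorem nwjObjective_le_klReal [P.HaveLebesgueDecomposition Q] [SigmaFinite P]
    (hPQ : P ≪ Q) (hKL : Integrable (fun x => Real.log ((P.rnDeriv Q x).toReal)) P)
    {f : X → ℝ} (hf : Integrable f P) (hexp : Integrable (fun x => Real.exp (f x - 1)) Q) :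
    nwjObjective P Q f ≤ klReal P Q := by
  have hfQ := (integrable_toReal_rnDeriv_mul_iff hPQ).2 hf
  have hKLQ := (integrable_toReal_rnDeriv_mul_iff hPQ).2 hKL
  rw [nwjObjective, klReal, ← integral_toReal_rnDeriv_mul hPQ,
    ← integral_toReal_rnDeriv_mul hPQ, ← integral_sub hfQ hexp]
  exact integral_mono (hfQ.sub hexp) hKLQ fun x =>
    Real.mul_sub_exp_sub_one_le_mul_log ENNReal.toReal_nonneg (f x)

theorem integral_one_add_log_rnDeriv [IsFiniteMeasure P]
    (hKL : Integrable (fun x => Real.log ((P.rnDeriv Q x).toReal)) P) :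
    ∫ x, (1 + Real.log ((P.rnDeriv Q x).toReal)) ∂P = P.real Set.univ + klReal P Q := by
  rw [integral_add (integrable_const 1) hKL, integral_const, smul_eq_mul, mul_one, klReal]

theorem exists_measurable_pos_le_add_eq {g : X → ℝ} (hg : Measurable g) (hg0 : ∀ x, 0 ≤ g x)
    {δ : ℝ} (hδ : 0 < δ) :
    ∃ h : X → ℝ, Measurable h ∧ (∀ x, 0 < h x) ∧ (∀ x, h x ≤ g x + δ) ∧
      ∀ x, g x ≠ 0 → h x = g x := by
  refine ⟨fun x => if g x = 0 then δ else g x,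
    Measurable.ite (hg (measurableSet_singleton 0)) measurable_const hg, fun x => ?_, fun x => ?_,
    fun x hx => if_neg hx⟩
  · dsimp only
    split_ifs with hx
    exacts [hδ, (hg0 x).lt_of_ne' hx]
  · dsimp only
    split_ifs with hx
    · simp [hx]
    · linarith

theorem exists_measurable_klReal_sub_le_nwjObjective [IsFiniteMeasure P] [IsFiniteMeasure Q]
    (hPQ : P ≪ Q) (hKL : Integrable (fun x => Real.log ((P.rnDeriv Q x).toReal)) P)
    {δ : ℝ} (hδ : 0 < δ) :
    ∃ f : X → ℝ, Measurable f ∧ Integrable f P ∧ Integrable (fun x => Real.exp (f x - 1)) Q ∧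
      klReal P Q - δ * Q.real Set.univ ≤ nwjObjective P Q f := by
  set g : X → ℝ := fun x => (P.rnDeriv Q x).toReal
  have hgQ : Integrable g Q := Measure.integrable_toReal_rnDeriv
  obtain ⟨h, hh, h_pos, h_le, h_eq⟩ := exists_measurable_pos_le_add_eq
    (Measure.measurable_rnDeriv P Q).ennreal_toReal (fun _ => ENNReal.toReal_nonneg) hδ
  have h_ae : ∀ᵐ x ∂P, h x = g x := by
    filter_upwards [Measure.rnDeriv_pos hPQ, hPQ.ae_le (Measure.rnDeriv_lt_top P Q)]
      with x hpos hlt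
    exact h_eq x (ENNReal.toReal_pos hpos.ne' hlt.ne).ne'
  have hgδQ : Integrable (fun x => g x + δ) Q := hgQ.add (integrable_const δ)
  have hhQ : Integrable h Q :=
    hgδQ.mono hh.aestronglyMeasurable (ae_of_all _ fun x => by
      simpa [abs_of_pos (h_pos x)] using (h_le x).trans (le_abs_self _))
  have hexp : ∀ x, Real.exp (1 + Real.log (h x) - 1) = h x := fun x => by
    simp [Real.exp_log (h_pos x)]
  have hf_ae : (fun x => 1 + Real.log (h x)) =ᵐ[P] fun x => 1 + Real.log (g x) := by
    filter_upwards [h_ae] with x hx using by rw [hx]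
  refine ⟨fun x => 1 + Real.log (h x), measurable_const.add hh.log,
    ((integrable_const 1).add hKL).congr hf_ae.symm, by simpa only [hexp] using hhQ, ?_⟩
  have h_int_le : ∫ x, h x ∂Q ≤ P.real Set.univ + δ * Q.real Set.univ := by
    calc ∫ x, h x ∂Q ≤ ∫ x, (g x + δ) ∂Q := integral_mono hhQ hgδQ h_le
      _ = P.real Set.univ + δ * Q.real Set.univ := by
        rw [integral_add hgQ (integrable_const δ), Measure.integral_toReal_rnDeriv hPQ,
          integral_const, smul_eq_mul, mul_comm]
  rw [nwjObjective, integral_congr_ae hf_ae, integral_one_add_log_rnDeriv hKL]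
  simp only [hexp]
  linarith

theorem isLUB_nwjObjective [IsFiniteMeasure P] [IsFiniteMeasure Q] (hPQ : P ≪ Q)
    (hKL : Integrable (fun x => Real.log ((P.rnDeriv Q x).toReal)) P) :
    IsLUB {z : ℝ | ∃ f : X → ℝ, Measurable f ∧ Integrable f P ∧
        Integrable (fun x => Real.exp (f x - 1)) Q ∧ z = nwjObjective P Q f} (klReal P Q) := by
  refine ⟨?_, fun b hb => le_of_forall_pos_le_add fun ε hε => ?_⟩
  · rintro _ ⟨f, -, hf, hexp, rfl⟩
    exact nwjObjective_le_klReal hPQ hKL hf hexp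
  · have hQ : 0 ≤ Q.real Set.univ := measureReal_nonneg
    obtain ⟨f, hfm, hf, hexp, hle⟩ := exists_measurable_klReal_sub_le_nwjObjective hPQ hKL
      (δ := ε / (Q.real Set.univ + 1)) (by positivity)
    have hδ : ε / (Q.real Set.univ + 1) * Q.real Set.univ ≤ ε := by
      rw [div_mul_eq_mul_div, div_le_iff₀ (by positivity)]
      nlinarith
    linarith [hb ⟨f, hfm, hf, hexp, rfl⟩]

end NWJ

/-- The Nguyen–Wainwright–Jordan representation of the KL divergence:
for probability measures `P ≪ Q` with `KL(P‖Q) < ∞`, every measurable `f` with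
`f ∈ L¹(P)` and `e^{f-1} ∈ L¹(Q)` satisfies `E_P[f] - E_Q[e^{f-1}] ≤ KL(P‖Q)`,
the supremum of the left-hand side over all such `f` equals `KL(P‖Q)`, and it is
attained at `f = 1 + log (dP/dQ)` (for which `e^{f-1} = dP/dQ`). -/
theorem nwj_representation {X : Type*} [MeasurableSpace X] (P Q : Measure X)
    [IsProbabilityMeasure P] [IsProbabilityMeasure Q] (hPQ : P ≪ Q)
    (hKL : Integrable (fun x => Real.log ((P.rnDeriv Q x).toReal)) P) :
    (∀ f : X → ℝ, Measurable f → Integrable f P →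
      Integrable (fun x => Real.exp (f x - 1)) Q →
      (∫ x, f x ∂P) - (∫ x, Real.exp (f x - 1) ∂Q) ≤ klReal P Q) ∧
    sSup {z : ℝ | ∃ f : X → ℝ, Measurable f ∧ Integrable f P ∧
        Integrable (fun x => Real.exp (f x - 1)) Q ∧
        z = (∫ x, f x ∂P) - (∫ x, Real.exp (f x - 1) ∂Q)}
      = klReal P Q ∧
    (∫ x, (1 + Real.log ((P.rnDeriv Q x).toReal)) ∂P)
        - (∫ x, (P.rnDeriv Q x).toReal ∂Q) = klReal P Q := by
  refine ⟨fun f _ hf hexp => nwjObjective_le_klReal hPQ hKL hf hexp,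
    (isLUB_nwjObjective hPQ hKL).csSup_eq
      ⟨_, fun _ => 0, measurable_const, integrable_const 0, integrable_const _, rfl⟩, ?_⟩
  rw [integral_one_add_log_rnDeriv hKL, Measure.integral_toReal_rnDeriv hPQ]
  ring
end
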